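/- arXiv:2604.13641 — 3 statements merged into one kernel-verified Lean document; each statement's English description precedes it below -/
import Mathlib

section
/- For each η ∈ ℝ, the vectors F₀(η) = (√2(1+η²)/√((η²+2)(5η²+8))) χ₀ − (√(3η²+6)/√(5η²+8)) χ₄ and F_{±1}(η) = (√(3η²+3)/√(10η²+16)) χ₀ ∓ (√2/2) χ₁ + (√(η²+1)/√(5η²+8)) χ₄ (together with F₂ = χ₂, F₃ = χ₃) satisfy the orthonormality relations (F_j(η), F_k(η))_η = δ_{jk} for −1 ≤ j, k ≤ 3, where (f,g)_η = (f,g) + (1+η²)^{-1}(P_d f, P_d g) and P_d f = (f, χ₀) χ₀. -/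
/-- The vectors `F₋₁(η), F₀(η), F₁(η), F₂, F₃` expressed in the orthonormal
basis `{χ₀,χ₁,χ₂,χ₃,χ₄}` of `N₀`; index `0 ↦ F₋₁`, `1 ↦ F₀`, `2 ↦ F₁`,
`3 ↦ F₂`, `4 ↦ F₃`. -/
noncomputable def Fvec (η : ℝ) : Fin 5 → Fin 5 → ℝ
  | 0 => ![Real.sqrt (3 * η ^ 2 + 3) / Real.sqrt (10 * η ^ 2 + 16),
           Real.sqrt 2 / 2, 0, 0,
           Real.sqrt (η ^ 2 + 1) / Real.sqrt (5 * η ^ 2 + 8)]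
  | 1 => ![Real.sqrt 2 * (1 + η ^ 2) / Real.sqrt ((η ^ 2 + 2) * (5 * η ^ 2 + 8)),
           0, 0, 0, -(Real.sqrt (3 * η ^ 2 + 6) / Real.sqrt (5 * η ^ 2 + 8))]
  | 2 => ![Real.sqrt (3 * η ^ 2 + 3) / Real.sqrt (10 * η ^ 2 + 16),
           -(Real.sqrt 2 / 2), 0, 0,
           Real.sqrt (η ^ 2 + 1) / Real.sqrt (5 * η ^ 2 + 8)]
  | 3 => ![0, 0, 1, 0, 0]
  | 4 => ![0, 0, 0, 1, 0]

/-- The weighted inner product `(f,g)_η = (f,g) + (1+η²)⁻¹ (P_d f, P_d g)`,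
in coordinates with respect to the orthonormal basis `{χ₀,…,χ₄}`, where
`P_d` is the projection onto `span{χ₀}`. -/
noncomputable def innerEta (η : ℝ) (a b : Fin 5 → ℝ) : ℝ :=
  (∑ i, a i * b i) + (1 + η ^ 2)⁻¹ * (a 0 * b 0)

/-!
Write a = √(η²+1), b = √(η²+2), c = √(5η²+8). After the factorizations √(3η²+3) = √3·a,
√(10η²+16) = √2·c and √(3η²+6) = √3·b, every coefficient of F₋₁, F₀, F₁ is a monomial in
a, b, c⁻¹, √2, √3, and the weight 1 + (1+η²)⁻¹ of the χ₀-component is (η²+2)/(η²+1).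
Each nontrivial Gram entry is then a rational identity needing only the squares of a, b, c.
-/

open Real

lemma innerEta_apply (η : ℝ) (x y : Fin 5 → ℝ) :
    innerEta η x y = (η ^ 2 + 2) / (η ^ 2 + 1) * (x 0 * y 0) + x 1 * y 1 + x 2 * y 2
      + x 3 * y 3 + x 4 * y 4 := by
  have : (η ^ 2 + 1) ≠ 0 := by positivity
  simp only [innerEta, Fin.sum_univ_five]
  field_simp
  ring

lemma sqrt_three_mul_add_three (η : ℝ) : √(3 * η ^ 2 + 3) = √3 * √(η ^ 2 + 1) := by
  rw [← sqrt_mul (by norm_num)]; ring_nf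

lemma sqrt_ten_mul_add_sixteen (η : ℝ) : √(10 * η ^ 2 + 16) = √2 * √(5 * η ^ 2 + 8) := by
  rw [← sqrt_mul (by norm_num)]; ring_nf

lemma sqrt_three_mul_add_six (η : ℝ) : √(3 * η ^ 2 + 6) = √3 * √(η ^ 2 + 2) := by
  rw [← sqrt_mul (by norm_num)]; ring_nf

section Coefficients

variable {η a b c : ℝ}

lemma Fpm_coeffs_normalized (ha : a ^ 2 = η ^ 2 + 1) (hc : c ^ 2 = 5 * η ^ 2 + 8) :
    (η ^ 2 + 2) / (η ^ 2 + 1) * (√3 * a / (√2 * c)) ^ 2 + (√2 / 2) ^ 2 + (a / c) ^ 2 = 1 := by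
  simp only [div_pow, mul_pow, sq_sqrt zero_le_two, sq_sqrt zero_le_three, ha, hc]
  field_simp
  ring

lemma Fpm_coeffs_orthogonal (ha : a ^ 2 = η ^ 2 + 1) (hc : c ^ 2 = 5 * η ^ 2 + 8) :
    (η ^ 2 + 2) / (η ^ 2 + 1) * (√3 * a / (√2 * c)) ^ 2 - (√2 / 2) ^ 2 + (a / c) ^ 2 = 0 := by
  simp only [div_pow, mul_pow, sq_sqrt zero_le_two, sq_sqrt zero_le_three, ha, hc]
  field_simp
  ring

lemma F0_coeffs_normalized (hb : b ^ 2 = η ^ 2 + 2) (hc : c ^ 2 = 5 * η ^ 2 + 8) :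
    (η ^ 2 + 2) / (η ^ 2 + 1) * (√2 * (1 + η ^ 2) / (b * c)) ^ 2 + (√3 * b / c) ^ 2 = 1 := by
  simp only [div_pow, mul_pow, sq_sqrt zero_le_two, sq_sqrt zero_le_three, hb, hc]
  field_simp
  ring

lemma Fpm_F0_coeffs_orthogonal (hb : b ^ 2 = η ^ 2 + 2) :
    (η ^ 2 + 2) / (η ^ 2 + 1) * (√3 * a / (√2 * c)) * (√2 * (1 + η ^ 2) / (b * c))
      - a / c * (√3 * b / c) = 0 := by
  rcases eq_or_ne c 0 with rfl | hc0
  · simp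
  have hb0 : b ≠ 0 := by rintro rfl; nlinarith
  field_simp
  rw [hb]
  ring

end Coefficients

/-- Orthonormality `(F_j(η), F_k(η))_η = δ_{jk}` for `-1 ≤ j,k ≤ 3`. -/
theorem stmt_3 (η : ℝ) (j k : Fin 5) :
    innerEta η (Fvec η j) (Fvec η k) = if j = k then (1 : ℝ) else 0 := by
  have ha : √(η ^ 2 + 1) ^ 2 = η ^ 2 + 1 := sq_sqrt (by positivity)
  have hb : √(η ^ 2 + 2) ^ 2 = η ^ 2 + 2 := sq_sqrt (by positivity)
  have hc : √(5 * η ^ 2 + 8) ^ 2 = 5 * η ^ 2 + 8 := sq_sqrt (by positivity)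
  have hFpm_norm := Fpm_coeffs_normalized ha hc
  have hFpm_orth := Fpm_coeffs_orthogonal ha hc
  have hF0_norm := F0_coeffs_normalized hb hc
  have hFpm_F0_orth := Fpm_F0_coeffs_orthogonal (a := √(η ^ 2 + 1)) (c := √(5 * η ^ 2 + 8)) hb
  fin_cases j <;> fin_cases k <;>
    simp only [Fvec, innerEta_apply, sqrt_three_mul_add_three, sqrt_ten_mul_add_sixteen,
      sqrt_three_mul_add_six, sqrt_mul (show 0 ≤ η ^ 2 + 2 by positivity), Fin.isValue,
      Fin.reduceFinMk, Fin.zero_eta, Fin.mk_one, Fin.reduceEq, Matrix.cons_val_zero,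
      Matrix.cons_val_one, Matrix.cons_val, mul_zero, zero_mul, add_zero, zero_add, mul_one, mul_neg,
      neg_mul, neg_neg, neg_zero, ↓reduceIte] <;>
    first
    | linear_combination hFpm_norm
    | linear_combination hFpm_orth
    | linear_combination hF0_norm
    | linear_combination hFpm_F0_orth
end

section
/- There exists a constant C > 0 such that for all t > 0, ∫₀ᵗ (1 + t − s)^{-3/4} · ln(2 + 1/(t−s)) · (1+s)^{-3/2} ds ≤ C (1+t)^{-3/4}. -/
/-!
The logarithm is absorbed into the singular power: from `log x ≤ x ^ a / a` and
`2 + 1/u ≤ 2 (1 + u) / u` one gets `(1 + u)^(-a) log (2 + 1/u) ≤ (2^a / a) u^(-a)`, so it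
suffices to bound `∫₀ᵗ (t - s)^(-a) (1 + s)^(-b) ds` for `0 ≤ a < 1 < b`. For `t ≤ 1` this is at
most `∫₀ᵗ (t - s)^(-a) ds ≤ 1 / (1 - a)`. For `t ≥ 1` split at `t / 2`: on `[0, t/2]` the kernel
is at most `(t/2)^(-a)` and `(1 + s)^(-b)` is integrable on `[0, ∞)`; on `[t/2, t]` the weight
is at most `(1 + t/2)^(-b)`, which absorbs `∫ (t - s)^(-a) ds = (t/2)^(1-a) / (1 - a)` as `b ≥ 1`.
-/

open Real Set MeasureTheory intervalIntegral

lemma rpow_neg_le_mul_rpow_neg {x y k a : ℝ} (hy : 0 < y) (hk : 1 ≤ k) (ha0 : 0 ≤ a)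
    (ha1 : a ≤ 1) (h : y ≤ k * x) : x ^ (-a) ≤ k * y ^ (-a) := by
  have hk0 : 0 < k := one_pos.trans_le hk
  calc x ^ (-a) ≤ (y / k) ^ (-a) :=
        rpow_le_rpow_of_nonpos (by positivity) (by rwa [div_le_iff₀' hk0]) (by linarith)
    _ = k ^ a * y ^ (-a) := by
        rw [div_rpow hy.le hk0.le, rpow_neg hk0.le, div_inv_eq_mul, mul_comm]
    _ ≤ k * y ^ (-a) := by
        gcongr
        simpa using rpow_le_rpow_of_exponent_le hk ha1

lemma rpow_neg_mul_log_two_add_inv_le {a u : ℝ} (ha : 0 < a) (hu : 0 < u) :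
    (1 + u) ^ (-a) * log (2 + 1 / u) ≤ 2 ^ a / a * u ^ (-a) := by
  have hlog : log (2 + 1 / u) ≤ (2 * (1 + u) * u⁻¹) ^ a / a := by
    refine (log_le_rpow_div (by positivity) ha).trans ?_
    gcongr
    field_simp
    linarith
  calc (1 + u) ^ (-a) * log (2 + 1 / u)
      ≤ (1 + u) ^ (-a) * ((2 * (1 + u) * u⁻¹) ^ a / a) := by gcongr
    _ = 2 ^ a / a * ((1 + u) ^ (-a) * (1 + u) ^ a) * u ^ (-a) := by
        rw [mul_rpow (by positivity) (by positivity), mul_rpow (by positivity) (by positivity),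
          inv_rpow hu.le, ← rpow_neg hu.le]
        ring
    _ = 2 ^ a / a * u ^ (-a) := by
        rw [← rpow_add (by positivity), neg_add_cancel, rpow_zero, mul_one]

lemma integral_sub_rpow_neg {a c t : ℝ} (ha : a < 1) :
    ∫ s in c..t, (t - s) ^ (-a) = (t - c) ^ (1 - a) / (1 - a) := by
  rw [integral_comp_sub_left (fun u => u ^ (-a)), sub_self,
    integral_rpow (Or.inl (by linarith)), zero_rpow (by linarith)]
  ring_nf

lemma integral_one_add_rpow_neg_le {b x : ℝ} (hb : 1 < b) (hx : 0 ≤ x) :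
    ∫ s in (0 : ℝ)..x, (1 + s) ^ (-b) ≤ 1 / (b - 1) := by
  rw [integral_comp_add_left (fun u => u ^ (-b)), integral_rpow (Or.inr ⟨by linarith, ?_⟩)]
  · rw [add_zero, one_rpow, div_le_iff_of_neg (by linarith)]
    have : 0 ≤ (1 + x) ^ (-b + 1) := by positivity
    have hb1 : b - 1 ≠ 0 := by linarith
    rw [show 1 / (b - 1) * (-b + 1) = -1 by field_simp; ring]
    linarith
  · rw [uIcc_of_le (by linarith)]
    exact fun h => by linarith [h.1]

section Convolution

variable {a b t : ℝ}

lemma intervalIntegrable_sub_rpow_neg (ha : a < 1) (c d : ℝ) :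
    IntervalIntegrable (fun s => (t - s) ^ (-a)) volume c d := by
  simpa using
    (intervalIntegrable_rpow' (a := t - c) (b := t - d) (by linarith : -1 < -a)).comp_sub_left t

lemma intervalIntegrable_sub_rpow_neg_mul_one_add_rpow {c d : ℝ} (ha : a < 1) (hc : 0 ≤ c)
    (hcd : c ≤ d) :
    IntervalIntegrable (fun s => (t - s) ^ (-a) * (1 + s) ^ (-b)) volume c d := by
  refine (intervalIntegrable_sub_rpow_neg ha c d).mul_continuousOn
    (ContinuousOn.rpow_const (by fun_prop) fun s hs => Or.inl ?_)
  rw [uIcc_of_le hcd] at hs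
  linarith [hs.1]

lemma integral_sub_rpow_neg_mul_one_add_rpow_le_of_le_one (ha0 : 0 ≤ a) (ha1 : a < 1)
    (hb : 0 ≤ b) (ht0 : 0 ≤ t) (ht1 : t ≤ 1) :
    ∫ s in (0 : ℝ)..t, (t - s) ^ (-a) * (1 + s) ^ (-b) ≤ 2 / (1 - a) * (1 + t) ^ (-a) := by
  calc ∫ s in (0 : ℝ)..t, (t - s) ^ (-a) * (1 + s) ^ (-b)
      ≤ ∫ s in (0 : ℝ)..t, (t - s) ^ (-a) := by
        refine integral_mono_on ht0
          (intervalIntegrable_sub_rpow_neg_mul_one_add_rpow ha1 le_rfl ht0)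
          (intervalIntegrable_sub_rpow_neg ha1 _ _) fun s hs => ?_
        exact mul_le_of_le_one_right (rpow_nonneg (by linarith [hs.2]) _)
          (rpow_le_one_of_one_le_of_nonpos (by linarith [hs.1]) (by linarith))
    _ = t ^ (1 - a) / (1 - a) := by rw [integral_sub_rpow_neg ha1, sub_zero]
    _ ≤ 1 / (1 - a) := by
        gcongr
        exact rpow_le_one ht0 ht1 (by linarith)
    _ ≤ 2 / (1 - a) * (1 + t) ^ (-a) := by
        have h1 := rpow_neg_le_mul_rpow_neg (x := 1) (y := 1 + t) (k := 2) (by linarith)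
          one_le_two ha0 ha1.le (by linarith)
        rw [one_rpow] at h1
        rw [div_mul_eq_mul_div]
        gcongr

lemma integral_sub_rpow_neg_mul_one_add_rpow_le_on_upper_half (ha0 : 0 ≤ a) (ha1 : a < 1)
    (hb : 1 ≤ b) (ht : 0 ≤ t) :
    ∫ s in t / 2..t, (t - s) ^ (-a) * (1 + s) ^ (-b) ≤ 2 / (1 - a) * (1 + t) ^ (-a) := by
  calc ∫ s in t / 2..t, (t - s) ^ (-a) * (1 + s) ^ (-b)
      ≤ ∫ s in t / 2..t, (1 + t / 2) ^ (-b) * (t - s) ^ (-a) := by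
        refine integral_mono_on (by linarith)
          (intervalIntegrable_sub_rpow_neg_mul_one_add_rpow ha1 (by linarith) (by linarith))
          ((intervalIntegrable_sub_rpow_neg ha1 _ _).const_mul _) fun s hs => ?_
        rw [mul_comm]
        exact mul_le_mul_of_nonneg_right
          (rpow_le_rpow_of_nonpos (by positivity) (by linarith [hs.1]) (by linarith))
          (rpow_nonneg (by linarith [hs.2]) _)
    _ = (1 + t / 2) ^ (-b) * (t / 2) ^ (1 - a) / (1 - a) := by
        rw [intervalIntegral.integral_const_mul, integral_sub_rpow_neg ha1, sub_half, mul_div_assoc]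
    _ ≤ (1 + t / 2) ^ (-b) * (1 + t / 2) ^ (1 - a) / (1 - a) := by
        gcongr
        linarith
    _ = (1 + t / 2) ^ (1 - a - b) / (1 - a) := by
        rw [← rpow_add (by positivity)]
        ring_nf
    _ ≤ (1 + t / 2) ^ (-a) / (1 - a) := by
        gcongr <;> linarith
    _ ≤ 2 / (1 - a) * (1 + t) ^ (-a) := by
        have h := rpow_neg_le_mul_rpow_neg (x := 1 + t / 2) (y := 1 + t) (k := 2) (by linarith)
          one_le_two ha0 ha1.le (by linarith)
        rw [div_mul_eq_mul_div]
        gcongr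

lemma integral_sub_rpow_neg_mul_one_add_rpow_le_on_lower_half (ha0 : 0 ≤ a) (ha1 : a < 1)
    (hb : 1 < b) (ht : 1 ≤ t) :
    ∫ s in (0 : ℝ)..t / 2, (t - s) ^ (-a) * (1 + s) ^ (-b) ≤ 4 / (b - 1) * (1 + t) ^ (-a) := by
  have hone : IntervalIntegrable (fun s => (1 + s) ^ (-b)) volume 0 (t / 2) := by
    refine ContinuousOn.intervalIntegrable
      (ContinuousOn.rpow_const (by fun_prop) fun s hs => Or.inl ?_)
    rw [uIcc_of_le (by linarith)] at hs
    linarith [hs.1]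
  calc ∫ s in (0 : ℝ)..t / 2, (t - s) ^ (-a) * (1 + s) ^ (-b)
      ≤ ∫ s in (0 : ℝ)..t / 2, (t / 2) ^ (-a) * (1 + s) ^ (-b) := by
        refine integral_mono_on (by linarith)
          (intervalIntegrable_sub_rpow_neg_mul_one_add_rpow ha1 le_rfl (by linarith))
          (hone.const_mul _) fun s hs => ?_
        exact mul_le_mul_of_nonneg_right
          (rpow_le_rpow_of_nonpos (by linarith) (by linarith [hs.2]) (by linarith))
          (rpow_nonneg (by linarith [hs.1]) _)
    _ ≤ (t / 2) ^ (-a) * (1 / (b - 1)) := by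
        rw [intervalIntegral.integral_const_mul]
        gcongr
        exact integral_one_add_rpow_neg_le hb (by linarith)
    _ ≤ 4 / (b - 1) * (1 + t) ^ (-a) := by
        have h := rpow_neg_le_mul_rpow_neg (x := t / 2) (y := 1 + t) (k := 4) (by linarith)
          (by norm_num) ha0 ha1.le (by linarith)
        rw [mul_one_div, div_mul_eq_mul_div]
        gcongr

end Convolution

theorem exists_integral_sub_rpow_neg_mul_one_add_rpow_le {a b : ℝ} (ha0 : 0 ≤ a) (ha1 : a < 1)
    (hb : 1 < b) :
    ∃ C > 0, ∀ t > 0,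
      ∫ s in (0 : ℝ)..t, (t - s) ^ (-a) * (1 + s) ^ (-b) ≤ C * (1 + t) ^ (-a) := by
  have ha : 0 < 1 - a := by linarith
  have hb' : 0 < b - 1 := by linarith
  refine ⟨2 / (1 - a) + 4 / (b - 1), by positivity, fun t ht => ?_⟩
  rcases le_total t 1 with ht1 | ht1
  · calc _ ≤ 2 / (1 - a) * (1 + t) ^ (-a) :=
          integral_sub_rpow_neg_mul_one_add_rpow_le_of_le_one ha0 ha1 (by linarith) ht.le ht1
      _ ≤ _ := by gcongr; linarith [div_pos four_pos hb']
  · rw [← integral_add_adjacent_intervals (b := t / 2)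
      (intervalIntegrable_sub_rpow_neg_mul_one_add_rpow ha1 le_rfl (by linarith))
      (intervalIntegrable_sub_rpow_neg_mul_one_add_rpow ha1 (by linarith) (by linarith))]
    linarith [integral_sub_rpow_neg_mul_one_add_rpow_le_on_lower_half ha0 ha1 hb ht1,
      integral_sub_rpow_neg_mul_one_add_rpow_le_on_upper_half ha0 ha1 hb.le ht.le]

theorem exists_integral_rpow_neg_mul_log_mul_rpow_neg_le {a b : ℝ} (ha0 : 0 < a) (ha1 : a < 1)
    (hb : 1 < b) :
    ∃ C > 0, ∀ t > 0,
      ∫ s in (0 : ℝ)..t, (1 + t - s) ^ (-a) * log (2 + 1 / (t - s)) * (1 + s) ^ (-b)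
        ≤ C * (1 + t) ^ (-a) := by
  obtain ⟨C, hC, hconv⟩ := exists_integral_sub_rpow_neg_mul_one_add_rpow_le ha0.le ha1 hb
  refine ⟨2 ^ a / a * C, by positivity, fun t ht => ?_⟩
  have hint := (intervalIntegrable_sub_rpow_neg_mul_one_add_rpow (t := t) (b := b) ha1 le_rfl
    ht.le).const_mul (2 ^ a / a)
  calc _ ≤ ∫ s in (0 : ℝ)..t, 2 ^ a / a * ((t - s) ^ (-a) * (1 + s) ^ (-b)) := by
        -- Compare on `Ioo`: at `s = t` the majorant is `0 ^ (-a) = 0` while the integrand is not.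
        rw [integral_of_le ht.le, integral_of_le ht.le, integral_Ioc_eq_integral_Ioo,
          integral_Ioc_eq_integral_Ioo]
        refine setIntegral_mono_of_nonneg (fun s hs => ?_) (fun s hs => ?_)
          (hint.1.mono_set Ioo_subset_Ioc_self)
        · exact mul_nonneg (mul_nonneg (rpow_nonneg (by linarith [hs.2]) _)
            (log_nonneg (by linarith [one_div_pos.mpr (sub_pos.mpr hs.2)])))
            (rpow_nonneg (by linarith [hs.1]) _)
        · rw [add_sub_assoc, ← mul_assoc]
          exact mul_le_mul_of_nonneg_right
            (rpow_neg_mul_log_two_add_inv_le ha0 (sub_pos.mpr hs.2))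
            (rpow_nonneg (by linarith [hs.1]) _)
    _ = 2 ^ a / a * ∫ s in (0 : ℝ)..t, (t - s) ^ (-a) * (1 + s) ^ (-b) :=
        intervalIntegral.integral_const_mul _ _
    _ ≤ 2 ^ a / a * C * (1 + t) ^ (-a) := by
        rw [mul_assoc]
        gcongr
        exact hconv t ht

/-- Convolution estimate with a logarithmic kernel:
`∫₀ᵗ (1+t-s)^{-3/4} ln(2 + 1/(t-s)) (1+s)^{-3/2} ds ≤ C (1+t)^{-3/4}`. -/
theorem stmt_8 :
    ∃ C > (0 : ℝ), ∀ t : ℝ, 0 < t →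
      (∫ s in (0 : ℝ)..t,
          (1 + t - s) ^ (-(3 : ℝ) / 4) * Real.log (2 + 1 / (t - s)) *
            (1 + s) ^ (-(3 : ℝ) / 2)) ≤ C * (1 + t) ^ (-(3 : ℝ) / 4) := by
  simpa only [neg_div] using
    exists_integral_rpow_neg_mul_log_mul_rpow_neg_le (a := 3 / 4) (b := 3 / 2)
      (by norm_num) (by norm_num) (by norm_num)
end

section
/- There exists a constant C > 0 such that for all t > 0, ∫₀ᵗ (1 + t − s)^{-3/4} (t−s)^{-1/2} (1+s)^{-3/2} ds ≤ C (1+t)^{-3/4}. -/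
open intervalIntegral Real Set MeasureTheory

lemma aux_int_ts (t a b : ℝ) :
    IntervalIntegrable (fun s => (t - s) ^ (-(1:ℝ)/2)) volume a b := by
  have h := (intervalIntegral.intervalIntegrable_rpow' (r := -(1:ℝ)/2) (by norm_num)
      (a := t - a) (b := t - b)).comp_sub_left t
  simpa using h

lemma aux_eval_ts (t a b : ℝ) :
    (∫ s in a..b, (t - s) ^ (-(1:ℝ)/2))
      = 2 * ((t - a) ^ ((1:ℝ)/2) - (t - b) ^ ((1:ℝ)/2)) := by
  rw [intervalIntegral.integral_comp_sub_left (fun x => x ^ (-(1:ℝ)/2)) t,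
    integral_rpow (Or.inl (by norm_num))]
  norm_num
  ring

lemma aux_int_os (a b : ℝ) (ha : 0 ≤ a) (hb : 0 ≤ b) :
    IntervalIntegrable (fun s => (1 + s) ^ (-(3:ℝ)/2)) volume a b := by
  apply ContinuousOn.intervalIntegrable
  apply ContinuousOn.rpow_const (by fun_prop)
  intro x hx
  rcases Set.mem_uIcc.mp hx with ⟨h1, _⟩ | ⟨h1, _⟩ <;> left <;> intro h <;> linarith

lemma aux_eval_os (a b : ℝ) (ha : 0 ≤ a) (hb : 0 ≤ b) :
    (∫ s in a..b, (1 + s) ^ (-(3:ℝ)/2))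
      = 2 * ((1 + a) ^ (-(1:ℝ)/2) - (1 + b) ^ (-(1:ℝ)/2)) := by
  rw [intervalIntegral.integral_comp_add_left (fun x => x ^ (-(3:ℝ)/2)) 1,
    integral_rpow (Or.inr ⟨by norm_num, by
      intro h
      rcases Set.mem_uIcc.mp h with ⟨h1, _⟩ | ⟨h1, _⟩ <;> linarith⟩)]
  norm_num
  ring

lemma aux_nonneg {t s : ℝ} (h0 : 0 ≤ s) (hst : s ≤ t) :
    0 ≤ (1 + t - s) ^ (-(3:ℝ)/4) * (t - s) ^ (-(1:ℝ)/2) * (1 + s) ^ (-(3:ℝ)/2) :=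
  mul_nonneg (mul_nonneg (Real.rpow_nonneg (by linarith) _)
    (Real.rpow_nonneg (by linarith) _)) (Real.rpow_nonneg (by linarith) _)

lemma aux_ptwise {t s : ℝ} (h0 : 0 ≤ s) (hst : s ≤ t) :
    (1 + t - s) ^ (-(3:ℝ)/4) * (t - s) ^ (-(1:ℝ)/2) * (1 + s) ^ (-(3:ℝ)/2)
      ≤ (t - s) ^ (-(1:ℝ)/2) := by
  have hA : (1 + t - s) ^ (-(3:ℝ)/4) ≤ 1 :=
    Real.rpow_le_one_of_one_le_of_nonpos (by linarith) (by norm_num)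
  have hC : (1 + s) ^ (-(3:ℝ)/2) ≤ 1 :=
    Real.rpow_le_one_of_one_le_of_nonpos (by linarith) (by norm_num)
  have hB0 : 0 ≤ (t - s) ^ (-(1:ℝ)/2) := Real.rpow_nonneg (by linarith) _
  have hC0 : 0 ≤ (1 + s) ^ (-(3:ℝ)/2) := Real.rpow_nonneg (by linarith) _
  have h1 : (1 + t - s) ^ (-(3:ℝ)/4) * (t - s) ^ (-(1:ℝ)/2) ≤ (t - s) ^ (-(1:ℝ)/2) :=
    mul_le_of_le_one_left hB0 hA
  have h2 := mul_le_mul h1 hC hC0 hB0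
  simpa using h2

lemma aux_meas (t : ℝ) :
    Measurable (fun s : ℝ =>
      (1 + t - s) ^ (-(3:ℝ)/4) * (t - s) ^ (-(1:ℝ)/2) * (1 + s) ^ (-(3:ℝ)/2)) := by
  fun_prop

lemma aux_intf (t : ℝ) (ht : 0 < t) :
    IntervalIntegrable (fun s : ℝ =>
      (1 + t - s) ^ (-(3:ℝ)/4) * (t - s) ^ (-(1:ℝ)/2) * (1 + s) ^ (-(3:ℝ)/2))
      volume 0 t := by
  apply (aux_int_ts t 0 t).mono_fun ((aux_meas t).aestronglyMeasurable)
  filter_upwards [ae_restrict_mem measurableSet_uIoc] with s hs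
  rw [Set.uIoc_of_le ht.le] at hs
  have h0 : 0 ≤ s := hs.1.le
  have hst : s ≤ t := hs.2
  rw [Real.norm_of_nonneg (aux_nonneg h0 hst),
    Real.norm_of_nonneg (Real.rpow_nonneg (by linarith) _)]
  exact aux_ptwise h0 hst

set_option maxHeartbeats 1000000 in
/-- Convolution estimate:
`∫₀ᵗ (1+t-s)^{-3/4} (t-s)^{-1/2} (1+s)^{-3/2} ds ≤ C (1+t)^{-3/4}`. -/
theorem stmt_9 :
    ∃ C > (0 : ℝ), ∀ t : ℝ, 0 < t →
      (∫ s in (0 : ℝ)..t,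
          (1 + t - s) ^ (-(3 : ℝ) / 4) * (t - s) ^ (-(1 : ℝ) / 2) *
            (1 + s) ^ (-(3 : ℝ) / 2)) ≤ C * (1 + t) ^ (-(3 : ℝ) / 4) := by
  refine ⟨16, by norm_num, fun t ht => ?_⟩
  have h1t : (0:ℝ) < 1 + t := by linarith
  have hIf := aux_intf t ht
  have hP0 : 0 ≤ (1 + t) ^ (-(3:ℝ)/4) := Real.rpow_nonneg (by linarith) _
  rcases le_or_gt t 1 with hle | hgt
  · -- small time
    have hmono : (∫ s in (0:ℝ)..t,
        (1 + t - s) ^ (-(3:ℝ)/4) * (t - s) ^ (-(1:ℝ)/2) * (1 + s) ^ (-(3:ℝ)/2))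
        ≤ ∫ s in (0:ℝ)..t, (t - s) ^ (-(1:ℝ)/2) := by
      apply intervalIntegral.integral_mono_on ht.le hIf (aux_int_ts t 0 t)
      intro s hs
      exact aux_ptwise hs.1 hs.2
    have heval := aux_eval_ts t 0 t
    rw [sub_zero, sub_self, Real.zero_rpow (by norm_num)] at heval
    have htle : t ^ ((1:ℝ)/2) ≤ 1 := Real.rpow_le_one ht.le hle (by norm_num)
    have hlb : (1:ℝ)/2 ≤ (1 + t) ^ (-(3:ℝ)/4) := by
      have h2 : (1 + t) ^ (-(3:ℝ)/4) ≥ (2:ℝ) ^ (-(3:ℝ)/4) :=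
        Real.rpow_le_rpow_of_nonpos h1t (by linarith) (by norm_num)
      have h3 : (2:ℝ) ^ (-1:ℝ) ≤ (2:ℝ) ^ (-(3:ℝ)/4) :=
        Real.rpow_le_rpow_of_exponent_le one_le_two (by norm_num)
      rw [Real.rpow_neg_one] at h3
      norm_num at h3
      linarith
    calc _ ≤ ∫ s in (0:ℝ)..t, (t - s) ^ (-(1:ℝ)/2) := hmono
      _ = 2 * (t ^ ((1:ℝ)/2) - 0) := heval
      _ ≤ 2 := by linarith
      _ ≤ 16 * (1 + t) ^ (-(3:ℝ)/4) := by linarith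
  · -- large time: split at t/2
    have ht2 : (0:ℝ) < t / 2 := by linarith
    have hsub1 : Set.uIcc (0:ℝ) (t/2) ⊆ Set.uIcc 0 t := by
      rw [Set.uIcc_of_le (by linarith), Set.uIcc_of_le ht.le]
      exact Set.Icc_subset_Icc le_rfl (by linarith)
    have hsub2 : Set.uIcc (t/2) t ⊆ Set.uIcc 0 t := by
      rw [Set.uIcc_of_le (by linarith), Set.uIcc_of_le ht.le]
      exact Set.Icc_subset_Icc (by linarith) le_rfl
    have hIf1 := hIf.mono_set hsub1
    have hIf2 := hIf.mono_set hsub2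
    have hsplit := (intervalIntegral.integral_add_adjacent_intervals hIf1 hIf2).symm
    have hK1 : (1 + t/2) ^ (-(3:ℝ)/4) ≤ 2 * (1 + t) ^ (-(3:ℝ)/4) := by
      have hhalf : (1:ℝ)/2 ≤ (2:ℝ) ^ (-(3:ℝ)/4) := by
        have h3 : (2:ℝ) ^ (-1:ℝ) ≤ (2:ℝ) ^ (-(3:ℝ)/4) :=
          Real.rpow_le_rpow_of_exponent_le one_le_two (by norm_num)
        rw [Real.rpow_neg_one] at h3
        norm_num at h3
        linarith
      have s1 : (1 + t/2) ^ (-(3:ℝ)/4) ≤ ((1 + t)/2) ^ (-(3:ℝ)/4) :=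
        Real.rpow_le_rpow_of_nonpos (by linarith) (by linarith) (by norm_num)
      have s2 : ((1 + t)/2) ^ (-(3:ℝ)/4)
          = (1 + t) ^ (-(3:ℝ)/4) / (2:ℝ) ^ (-(3:ℝ)/4) :=
        Real.div_rpow (by linarith) (by norm_num) _
      have s3 : (1 + t) ^ (-(3:ℝ)/4) / (2:ℝ) ^ (-(3:ℝ)/4)
          ≤ (1 + t) ^ (-(3:ℝ)/4) / (1/2) :=
        div_le_div_of_nonneg_left hP0 (by norm_num) hhalf
      have s4 : (1 + t) ^ (-(3:ℝ)/4) / (1/2) = 2 * (1 + t) ^ (-(3:ℝ)/4) := by ring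
      linarith
    have hK2 : (t/2) ^ (-(1:ℝ)/2) ≤ 2 := by
      have s1 : (t/2) ^ (-(1:ℝ)/2) ≤ ((1:ℝ)/2) ^ (-(1:ℝ)/2) :=
        Real.rpow_le_rpow_of_nonpos (by norm_num) (by linarith) (by norm_num)
      have s2 : ((1:ℝ)/2) ^ (-(1:ℝ)/2) ≤ ((1:ℝ)/4) ^ (-(1:ℝ)/2) :=
        Real.rpow_le_rpow_of_nonpos (by norm_num) (by norm_num) (by norm_num)
      have s3 : ((1:ℝ)/4) ^ (-(1:ℝ)/2) = 2 := by
        rw [show ((1:ℝ)/4) = ((1:ℝ)/2) ^ (2:ℕ) by norm_num,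
          ← Real.rpow_natCast ((1:ℝ)/2) 2, ← Real.rpow_mul (by norm_num)]
        norm_num
      linarith
    -- piece 1
    have hb1 : (∫ s in (0:ℝ)..(t/2),
        (1 + t - s) ^ (-(3:ℝ)/4) * (t - s) ^ (-(1:ℝ)/2) * (1 + s) ^ (-(3:ℝ)/2))
        ≤ 8 * (1 + t) ^ (-(3:ℝ)/4) := by
      have hg1int : IntervalIntegrable (fun s : ℝ =>
          (1 + t/2) ^ (-(3:ℝ)/4) * (t/2) ^ (-(1:ℝ)/2) * (1 + s) ^ (-(3:ℝ)/2))
          volume 0 (t/2) := by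
        have := (aux_int_os 0 (t/2) le_rfl ht2.le).const_mul
          ((1 + t/2) ^ (-(3:ℝ)/4) * (t/2) ^ (-(1:ℝ)/2))
        simpa [mul_assoc] using this
      have hmono1 : (∫ s in (0:ℝ)..(t/2),
          (1 + t - s) ^ (-(3:ℝ)/4) * (t - s) ^ (-(1:ℝ)/2) * (1 + s) ^ (-(3:ℝ)/2))
          ≤ ∫ s in (0:ℝ)..(t/2),
          (1 + t/2) ^ (-(3:ℝ)/4) * (t/2) ^ (-(1:ℝ)/2) * (1 + s) ^ (-(3:ℝ)/2) := by
        apply intervalIntegral.integral_mono_on (by linarith) hIf1 hg1int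
        intro s hs
        have hA : (1 + t - s) ^ (-(3:ℝ)/4) ≤ (1 + t/2) ^ (-(3:ℝ)/4) :=
          Real.rpow_le_rpow_of_nonpos (by linarith) (by linarith [hs.2]) (by norm_num)
        have hB : (t - s) ^ (-(1:ℝ)/2) ≤ (t/2) ^ (-(1:ℝ)/2) :=
          Real.rpow_le_rpow_of_nonpos ht2 (by linarith [hs.2]) (by norm_num)
        have hB0 : 0 ≤ (t/2) ^ (-(1:ℝ)/2) := Real.rpow_nonneg ht2.le _
        have hA0 : 0 ≤ (1 + t - s) ^ (-(3:ℝ)/4) := Real.rpow_nonneg (by linarith [hs.2]) _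
        have hC0 : 0 ≤ (1 + s) ^ (-(3:ℝ)/2) := Real.rpow_nonneg (by linarith [hs.1]) _
        have hA0' : 0 ≤ (1 + t/2) ^ (-(3:ℝ)/4) := Real.rpow_nonneg (by linarith) _
        exact mul_le_mul (mul_le_mul hA hB (Real.rpow_nonneg (by linarith [hs.2]) _) hA0')
          le_rfl hC0 (mul_nonneg hA0' hB0)
      have heval1 : (∫ s in (0:ℝ)..(t/2),
          (1 + t/2) ^ (-(3:ℝ)/4) * (t/2) ^ (-(1:ℝ)/2) * (1 + s) ^ (-(3:ℝ)/2))
          = (1 + t/2) ^ (-(3:ℝ)/4) * (t/2) ^ (-(1:ℝ)/2) *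
            (2 * (1 - (1 + t/2) ^ (-(1:ℝ)/2))) := by
        rw [show (fun s : ℝ =>
            (1 + t/2) ^ (-(3:ℝ)/4) * (t/2) ^ (-(1:ℝ)/2) * (1 + s) ^ (-(3:ℝ)/2))
            = fun s : ℝ => ((1 + t/2) ^ (-(3:ℝ)/4) * (t/2) ^ (-(1:ℝ)/2)) *
              (1 + s) ^ (-(3:ℝ)/2) from rfl,
          intervalIntegral.integral_const_mul, aux_eval_os 0 (t/2) le_rfl ht2.le]
        norm_num [Real.one_rpow]
      have hA0' : 0 ≤ (1 + t/2) ^ (-(3:ℝ)/4) := Real.rpow_nonneg (by linarith) _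
      have hB0' : 0 ≤ (t/2) ^ (-(1:ℝ)/2) := Real.rpow_nonneg ht2.le _
      have hu0 : 0 ≤ (1 + t/2) ^ (-(1:ℝ)/2) := Real.rpow_nonneg (by linarith) _
      have hKK : (1 + t/2) ^ (-(3:ℝ)/4) * (t/2) ^ (-(1:ℝ)/2)
          ≤ 2 * (1 + t) ^ (-(3:ℝ)/4) * 2 :=
        mul_le_mul hK1 hK2 hB0' (by linarith)
      rw [heval1] at hmono1
      nlinarith [mul_nonneg (mul_nonneg hA0' hB0') hu0]
    -- piece 2
    have hb2 : (∫ s in (t/2)..t,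
        (1 + t - s) ^ (-(3:ℝ)/4) * (t - s) ^ (-(1:ℝ)/2) * (1 + s) ^ (-(3:ℝ)/2))
        ≤ 8 * (1 + t) ^ (-(3:ℝ)/4) := by
      have hg2int : IntervalIntegrable (fun s : ℝ =>
          (t - s) ^ (-(1:ℝ)/2) * (1 + t/2) ^ (-(3:ℝ)/2)) volume (t/2) t :=
        (aux_int_ts t (t/2) t).mul_const _
      have hmono2 : (∫ s in (t/2)..t,
          (1 + t - s) ^ (-(3:ℝ)/4) * (t - s) ^ (-(1:ℝ)/2) * (1 + s) ^ (-(3:ℝ)/2))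
          ≤ ∫ s in (t/2)..t, (t - s) ^ (-(1:ℝ)/2) * (1 + t/2) ^ (-(3:ℝ)/2) := by
        apply intervalIntegral.integral_mono_on (by linarith) hIf2 hg2int
        intro s hs
        have hA1 : (1 + t - s) ^ (-(3:ℝ)/4) ≤ 1 :=
          Real.rpow_le_one_of_one_le_of_nonpos (by linarith [hs.2]) (by norm_num)
        have hC : (1 + s) ^ (-(3:ℝ)/2) ≤ (1 + t/2) ^ (-(3:ℝ)/2) :=
          Real.rpow_le_rpow_of_nonpos (by linarith) (by linarith [hs.1]) (by norm_num)
        have hB0 : 0 ≤ (t - s) ^ (-(1:ℝ)/2) := Real.rpow_nonneg (by linarith [hs.2]) _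
        have hC0 : 0 ≤ (1 + s) ^ (-(3:ℝ)/2) := Real.rpow_nonneg (by linarith [hs.1]) _
        have h1 : (1 + t - s) ^ (-(3:ℝ)/4) * (t - s) ^ (-(1:ℝ)/2) ≤ (t - s) ^ (-(1:ℝ)/2) :=
          mul_le_of_le_one_left hB0 hA1
        exact mul_le_mul h1 hC hC0 hB0
      have heval2 : (∫ s in (t/2)..t, (t - s) ^ (-(1:ℝ)/2) * (1 + t/2) ^ (-(3:ℝ)/2))
          = 2 * (t/2) ^ ((1:ℝ)/2) * (1 + t/2) ^ (-(3:ℝ)/2) := by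
        rw [intervalIntegral.integral_mul_const, aux_eval_ts t (t/2) t]
        rw [show t - t/2 = t/2 by ring, sub_self, Real.zero_rpow (by norm_num)]
        ring
      have hx : (t/2) ^ ((1:ℝ)/2) ≤ (1 + t) ^ ((1:ℝ)/2) :=
        Real.rpow_le_rpow ht2.le (by linarith) (by norm_num)
      have hC4 : (1 + t/2) ^ (-(3:ℝ)/2) ≤ 4 * (1 + t) ^ (-(3:ℝ)/2) := by
        have hq : (1:ℝ)/4 ≤ (2:ℝ) ^ (-(3:ℝ)/2) := by
          have h3 : (2:ℝ) ^ (-2:ℝ) ≤ (2:ℝ) ^ (-(3:ℝ)/2) :=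
            Real.rpow_le_rpow_of_exponent_le one_le_two (by norm_num)
          have h4 : (2:ℝ) ^ (-2:ℝ) = 1/4 := by
            rw [show (-2:ℝ) = ((-2:ℤ):ℝ) by norm_num, Real.rpow_intCast]
            norm_num
          linarith
        have s1 : (1 + t/2) ^ (-(3:ℝ)/2) ≤ ((1 + t)/2) ^ (-(3:ℝ)/2) :=
          Real.rpow_le_rpow_of_nonpos (by linarith) (by linarith) (by norm_num)
        have s2 : ((1 + t)/2) ^ (-(3:ℝ)/2)
            = (1 + t) ^ (-(3:ℝ)/2) / (2:ℝ) ^ (-(3:ℝ)/2) :=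
          Real.div_rpow (by linarith) (by norm_num) _
        have hZ0 : 0 ≤ (1 + t) ^ (-(3:ℝ)/2) := Real.rpow_nonneg (by linarith) _
        have s3 : (1 + t) ^ (-(3:ℝ)/2) / (2:ℝ) ^ (-(3:ℝ)/2)
            ≤ (1 + t) ^ (-(3:ℝ)/2) / (1/4) :=
          div_le_div_of_nonneg_left hZ0 (by norm_num) hq
        have s4 : (1 + t) ^ (-(3:ℝ)/2) / (1/4) = 4 * (1 + t) ^ (-(3:ℝ)/2) := by ring
        linarith
      have hYZ : (1 + t) ^ ((1:ℝ)/2) * (1 + t) ^ (-(3:ℝ)/2) = (1 + t) ^ (-1:ℝ) := by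
        rw [← Real.rpow_add h1t]
        norm_num
      have hfin : (1 + t) ^ (-1:ℝ) ≤ (1 + t) ^ (-(3:ℝ)/4) :=
        Real.rpow_le_rpow_of_exponent_le (by linarith) (by norm_num)
      have hx0 : 0 ≤ (t/2) ^ ((1:ℝ)/2) := Real.rpow_nonneg ht2.le _
      have hC0' : 0 ≤ (1 + t/2) ^ (-(3:ℝ)/2) := Real.rpow_nonneg (by linarith) _
      have hY0 : 0 ≤ (1 + t) ^ ((1:ℝ)/2) := Real.rpow_nonneg (by linarith) _
      have hXC : (t/2) ^ ((1:ℝ)/2) * (1 + t/2) ^ (-(3:ℝ)/2)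
          ≤ (1 + t) ^ ((1:ℝ)/2) * (4 * (1 + t) ^ (-(3:ℝ)/2)) :=
        mul_le_mul hx hC4 hC0' hY0
      rw [heval2] at hmono2
      nlinarith [hmono2, hXC, hYZ, hfin]
    rw [hsplit]
    linarith
end
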